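/- arXiv:1805.06699 — 2 statements merged into one kernel-verified Lean document; each statement's English description precedes it below -/
import Mathlib

section
/- Let G be a finite simple graph with no universal vertex, let M̄ be a maximum antimatching of G with |M̄| = m ≥ 1, and let K = V(G) ∖ V(M̄). Suppose moreover that every equivalence class of the relation on K identifying vertices with the same neighborhood inside V(M̄) has at most m vertices. Then |V(G)| ≤ m·(2^m + 1). -/
open Finset

/-- A finset of vertices is independent (stable) in `G`. -/
def IndepSet {V : Type*} (G : SimpleGraph V) (S : Finset V) : Prop :=
  ∀ u ∈ S, ∀ v ∈ S, ¬ G.Adj u v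

/-- A proper coloring of the subgraph of `G` induced by `A`:
a partition of `A` into independent sets (the color classes). -/
def IsProperColoring {V : Type*} [DecidableEq V] (G : SimpleGraph V) {A : Finset V}
    (P : Finpartition A) : Prop :=
  ∀ S ∈ P.parts, IndepSet G S

/-- The weight of a coloring: the sum over color classes of the maximum weight in the class. -/
def colWeight {V : Type*} [DecidableEq V] {A : Finset V} (w : V → ℕ) (P : Finpartition A) : ℕ :=
  ∑ S ∈ P.parts, S.sup w

/-- The weighted chromatic number of the subgraph of `G` induced by the vertex set `A`. -/
noncomputable def sigmaOn {V : Type*} [DecidableEq V] (G : SimpleGraph V) (w : V → ℕ)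
    (A : Finset V) : ℕ :=
  sInf { n | ∃ P : Finpartition A, IsProperColoring G P ∧ n = colWeight w P }

/-- The weighted chromatic number `σ(G,w)`. -/
noncomputable def sigmaW {V : Type*} [Fintype V] [DecidableEq V] (G : SimpleGraph V)
    (w : V → ℕ) : ℕ :=
  sigmaOn G w Finset.univ

/-- An antimatching of `G`: a set of pairwise disjoint unordered pairs of distinct
non-adjacent vertices of `G` (equivalently, a matching of the complement of `G`). -/
def IsAntimatching {V : Type*} (G : SimpleGraph V) (M : Finset (Sym2 V)) : Prop :=
  (∀ e ∈ M, e ∈ Gᶜ.edgeSet) ∧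
  ∀ e ∈ M, ∀ f ∈ M, e ≠ f → ∀ x, x ∈ e → x ∉ f

/-- A maximum antimatching of `G`. -/
def IsMaxAntimatching {V : Type*} (G : SimpleGraph V) (M : Finset (Sym2 V)) : Prop :=
  IsAntimatching G M ∧ ∀ M' : Finset (Sym2 V), IsAntimatching G M' → M'.card ≤ M.card

/-- The set `V(M̄)` of vertices covered by the pairs of `M`. -/
def coveredVerts {V : Type*} [Fintype V] [DecidableEq V] (M : Finset (Sym2 V)) : Finset V :=
  Finset.univ.filter fun v => ∃ e ∈ M, v ∈ e

/-- `G` is an interval graph: vertices can be assigned nonempty closed real intervals so that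
two distinct vertices are adjacent iff their intervals intersect. -/
def IsIntervalGraph {V : Type*} (G : SimpleGraph V) : Prop :=
  ∃ f : V → ℝ × ℝ, (∀ v, (f v).1 ≤ (f v).2) ∧
    ∀ u v : V, G.Adj u v ↔
      u ≠ v ∧ (Set.Icc (f u).1 (f u).2 ∩ Set.Icc (f v).1 (f v).2).Nonempty

lemma mem_coveredVerts {V : Type*} [Fintype V] [DecidableEq V] {M : Finset (Sym2 V)} {v : V} :
    v ∈ coveredVerts M ↔ ∃ e ∈ M, v ∈ e := by
  simp [coveredVerts]

lemma uncovered_notMem {V : Type*} [Fintype V] [DecidableEq V] {M : Finset (Sym2 V)} {u : V}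
    (hu : u ∉ coveredVerts M) : ∀ e ∈ M, u ∉ e := by
  intro e he hme
  exact hu (mem_coveredVerts.2 ⟨e, he, hme⟩)

/-- Uncovered vertices are pairwise adjacent in a maximum antimatching. -/
lemma K_clique {V : Type*} [Fintype V] [DecidableEq V] {G : SimpleGraph V}
    {M : Finset (Sym2 V)} (hM : IsMaxAntimatching G M) {u v : V}
    (hu : u ∉ coveredVerts M) (hv : v ∉ coveredVerts M) (huv : u ≠ v) : G.Adj u v := by
  by_contra hadj
  have hnm : s(u, v) ∉ M := fun h => (uncovered_notMem hu _ h) (by simp)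
  have ham : IsAntimatching G (insert s(u, v) M) := by
    constructor
    · intro e he
      rcases Finset.mem_insert.1 he with rfl | he
      · simpa [SimpleGraph.compl_adj] using And.intro huv hadj
      · exact hM.1.1 e he
    · intro e he f hf hef x hxe hxf
      rcases Finset.mem_insert.1 he with he' | heM
      · rcases Finset.mem_insert.1 hf with hf' | hfM
        · exact hef (he'.trans hf'.symm)
        · subst he'
          rcases Sym2.mem_iff.1 hxe with hx | hx
          · exact uncovered_notMem hu _ hfM (hx ▸ hxf)
          · exact uncovered_notMem hv _ hfM (hx ▸ hxf)
      · rcases Finset.mem_insert.1 hf with hf' | hfM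
        · subst hf'
          rcases Sym2.mem_iff.1 hxf with hx | hx
          · exact uncovered_notMem hu _ heM (hx ▸ hxe)
          · exact uncovered_notMem hv _ heM (hx ▸ hxe)
        · exact hM.1.2 e heM f hfM hef x hxe hxf
  have := hM.2 _ ham
  rw [Finset.card_insert_of_notMem hnm] at this
  omega

/-- Exchange lemma: two distinct uncovered vertices cannot miss the two endpoints of a pair. -/
lemma exchange {V : Type*} [Fintype V] [DecidableEq V] {G : SimpleGraph V}
    {M : Finset (Sym2 V)} (hM : IsMaxAntimatching G M) {u v a b : V}
    (hu : u ∉ coveredVerts M) (hv : v ∉ coveredVerts M) (huv : u ≠ v)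
    (hab : s(a, b) ∈ M) (hua : ¬ G.Adj u a) (hvb : ¬ G.Adj v b) : False := by
  have hGc : Gᶜ.Adj a b := (SimpleGraph.mem_edgeSet _).1 (hM.1.1 _ hab)
  have hne : a ≠ b := hGc.ne
  have hua' : u ≠ a := fun h => uncovered_notMem hu _ hab (by simp [h])
  have hub : u ≠ b := fun h => uncovered_notMem hu _ hab (by simp [h])
  have hva : v ≠ a := fun h => uncovered_notMem hv _ hab (by simp [h])
  have hvb' : v ≠ b := fun h => uncovered_notMem hv _ hab (by simp [h])
  have hsolo : ∀ f ∈ M, f ≠ s(a, b) → a ∉ f ∧ b ∉ f := by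
    intro f hf hfne
    exact ⟨hM.1.2 _ hab f hf (Ne.symm hfne) a (by simp),
           hM.1.2 _ hab f hf (Ne.symm hfne) b (by simp)⟩
  have hd1 : s(u, a) ≠ s(v, b) := by
    intro h
    rw [Sym2.eq_iff] at h
    tauto
  have hd2 : s(u, a) ∉ M := fun h => uncovered_notMem hu _ h (by simp)
  have hd3 : s(v, b) ∉ M := fun h => uncovered_notMem hv _ h (by simp)
  have ham : IsAntimatching G (insert s(u, a) (insert s(v, b) (M.erase s(a, b)))) := by
    have main : ∀ y, y ∈ s(u, a) → y ∈ s(v, b) → False := by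
      intro y hy1 hy2
      rcases Sym2.mem_iff.1 hy1 with rfl | rfl <;> rcases Sym2.mem_iff.1 hy2 with h | h
      · exact huv h
      · exact hub h
      · exact hva h.symm
      · exact hne h
    have mainMua : ∀ f ∈ M.erase s(a, b), ∀ y, y ∈ s(u, a) → y ∈ f → False := by
      intro f hf y hy1 hy2
      rcases Sym2.mem_iff.1 hy1 with rfl | rfl
      · exact uncovered_notMem hu _ (Finset.mem_of_mem_erase hf) hy2
      · exact (hsolo f (Finset.mem_of_mem_erase hf) (Finset.ne_of_mem_erase hf)).1 hy2
    have mainMvb : ∀ f ∈ M.erase s(a, b), ∀ y, y ∈ s(v, b) → y ∈ f → False := by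
      intro f hf y hy1 hy2
      rcases Sym2.mem_iff.1 hy1 with rfl | rfl
      · exact uncovered_notMem hv _ (Finset.mem_of_mem_erase hf) hy2
      · exact (hsolo f (Finset.mem_of_mem_erase hf) (Finset.ne_of_mem_erase hf)).2 hy2
    constructor
    · intro e he
      rcases Finset.mem_insert.1 he with rfl | he
      · simpa [SimpleGraph.compl_adj] using And.intro hua' hua
      rcases Finset.mem_insert.1 he with rfl | he
      · simpa [SimpleGraph.compl_adj] using And.intro hvb' hvb
      · exact hM.1.1 e (Finset.mem_of_mem_erase he)
    · intro e he f hf hef x hxe hxf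
      rcases Finset.mem_insert.1 he with rfl | he
      · rcases Finset.mem_insert.1 hf with rfl | hf
        · exact hef rfl
        rcases Finset.mem_insert.1 hf with rfl | hf
        · exact main x hxe hxf
        · exact mainMua f hf x hxe hxf
      rcases Finset.mem_insert.1 he with rfl | he
      · rcases Finset.mem_insert.1 hf with rfl | hf
        · exact main x hxf hxe
        rcases Finset.mem_insert.1 hf with rfl | hf
        · exact hef rfl
        · exact mainMvb f hf x hxe hxf
      · rcases Finset.mem_insert.1 hf with rfl | hf
        · exact mainMua e he x hxf hxe
        rcases Finset.mem_insert.1 hf with rfl | hf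
        · exact mainMvb e he x hxf hxe
        · exact hM.1.2 e (Finset.mem_of_mem_erase he) f (Finset.mem_of_mem_erase hf) hef x hxe hxf
  have hcard : (insert s(u, a) (insert s(v, b) (M.erase s(a, b)))).card = M.card + 1 := by
    have hvbE : s(v, b) ∉ M.erase s(a, b) := fun h => hd3 (Finset.mem_of_mem_erase h)
    have huaE : s(u, a) ∉ insert s(v, b) (M.erase s(a, b)) := by
      intro h
      rcases Finset.mem_insert.1 h with h | h
      · exact hd1 h
      · exact hd2 (Finset.mem_of_mem_erase h)
    have hpos : 1 ≤ M.card := Finset.card_pos.2 ⟨_, hab⟩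
    rw [Finset.card_insert_of_notMem huaE, Finset.card_insert_of_notMem hvbE,
      Finset.card_erase_of_mem hab]
    omega
  have := hM.2 _ ham
  omega

/-- under the hypotheses of Statement 7, if moreover every equivalence class of
`K` (same neighborhood inside `V(M̄)`) has at most `m` vertices, then `|V(G)| ≤ m·(2^m + 1)`. -/
theorem kernel_size_bound
    {V : Type*} [Fintype V] [DecidableEq V] (G : SimpleGraph V) [DecidableRel G.Adj]
    (hnouniv : ¬ ∃ u : V, ∀ v : V, v ≠ u → G.Adj u v)
    (M : Finset (Sym2 V)) (hM : IsMaxAntimatching G M)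
    (m : ℕ) (hm : M.card = m) (hm1 : 1 ≤ m)
    (K : Finset V) (hK : K = Finset.univ \ coveredVerts M)
    (hclass : ∀ u ∈ K,
      (K.filter fun v => ∀ x ∈ coveredVerts M, (G.Adj v x ↔ G.Adj u x)).card ≤ m) :
    Fintype.card V ≤ m * (2 ^ m + 1) := by
  classical
  set C : Finset V := coveredVerts M with hC
  have hKuncov : ∀ u ∈ K, u ∉ C := by
    intro u hu
    rw [hK] at hu
    exact (Finset.mem_sdiff.1 hu).2
  -- |C| ≤ 2m
  have hCcard : C.card ≤ 2 * m := by
    have hsub : C ⊆ M.biUnion fun e => Finset.univ.filter (· ∈ e) := by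
      intro x hx
      rcases mem_coveredVerts.1 hx with ⟨e, he, hxe⟩
      exact Finset.mem_biUnion.2 ⟨e, he, by simp [hxe]⟩
    calc C.card ≤ (M.biUnion fun e => Finset.univ.filter (· ∈ e)).card :=
          Finset.card_le_card hsub
      _ ≤ ∑ e ∈ M, (Finset.univ.filter (· ∈ e)).card := Finset.card_biUnion_le
      _ ≤ ∑ _e ∈ M, 2 := by
          apply Finset.sum_le_sum
          intro e _
          induction e using Sym2.ind with
          | _ a b =>
            have : Finset.univ.filter (· ∈ s(a, b)) ⊆ {a, b} := by
              intro x hx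
              simp only [Finset.mem_filter, Sym2.mem_iff] at hx
              simpa using hx.2
            calc (Finset.univ.filter (· ∈ s(a, b))).card ≤ ({a, b} : Finset V).card :=
                  Finset.card_le_card this
              _ ≤ 2 := Finset.card_insert_le .. |>.trans (by simp)
      _ = 2 * m := by rw [Finset.sum_const, hm]; ring
  -- neighborhood trace in C
  set c : V → Finset V := fun u => C.filter fun x => G.Adj u x with hc
  -- the set of "deficient" pairs, determined by the trace
  set T : Finset V → Finset (Sym2 V) := fun t => M.filter fun e => ∃ x ∈ e, x ∉ t with hT
  have hTc : ∀ u, T (c u) = M.filter fun e => ∃ x ∈ e, ¬ G.Adj u x := by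
    intro u
    apply Finset.filter_congr
    intro e he
    constructor
    · rintro ⟨x, hxe, hx⟩
      refine ⟨x, hxe, fun hadj => hx ?_⟩
      exact Finset.mem_filter.2 ⟨mem_coveredVerts.2 ⟨e, he, hxe⟩, hadj⟩
    · rintro ⟨x, hxe, hx⟩
      exact ⟨x, hxe, fun h => hx (Finset.mem_filter.1 h).2⟩
  -- key: traces with equal deficient sets coincide
  have hinj : ∀ u ∈ K, ∀ v ∈ K, T (c u) = T (c v) → c u = c v := by
    have onedir : ∀ u ∈ K, ∀ v ∈ K, T (c u) = T (c v) →
        ∀ x ∈ C, G.Adj u x → G.Adj v x := by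
      intro u hu v hv hTuv x hxC hux
      by_contra hvx
      have huvne : u ≠ v := by rintro rfl; exact hvx hux
      rcases mem_coveredVerts.1 hxC with ⟨e, he, hxe⟩
      rcases Sym2.mem_iff_exists.1 hxe with ⟨y, rfl⟩
      have heTv : s(x, y) ∈ T (c v) := by
        rw [hTc]
        exact Finset.mem_filter.2 ⟨he, x, by simp, hvx⟩
      have heTu : s(x, y) ∈ T (c u) := hTuv ▸ heTv
      rw [hTc] at heTu
      rcases (Finset.mem_filter.1 heTu).2 with ⟨z, hze, huz⟩
      rcases Sym2.mem_iff.1 hze with rfl | rfl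
      · exact huz hux
      · -- u misses y, v misses x, s(y,x) ∈ M
        exact exchange hM (hKuncov u hu) (hKuncov v hv) huvne
          (by rwa [Sym2.eq_swap] at he) huz hvx
    intro u hu v hv hTuv
    apply Finset.ext
    intro x
    simp only [hc, Finset.mem_filter]
    constructor
    · rintro ⟨hxC, hadj⟩
      exact ⟨hxC, onedir u hu v hv hTuv x hxC hadj⟩
    · rintro ⟨hxC, hadj⟩
      exact ⟨hxC, onedir v hv u hu hTuv.symm x hxC hadj⟩
  -- each K-vertex has a nonempty deficient set
  have hTne : ∀ u ∈ K, T (c u) ≠ ∅ := by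
    intro u hu h
    apply hnouniv
    refine ⟨u, fun v hvu => ?_⟩
    by_cases hvC : v ∈ C
    · by_contra hadj
      rcases mem_coveredVerts.1 hvC with ⟨e, he, hve⟩
      have : e ∈ T (c u) := by
        rw [hTc]
        exact Finset.mem_filter.2 ⟨he, v, hve, hadj⟩
      simp [h] at this
    · have hvK : v ∈ K := by
        rw [hK]
        exact Finset.mem_sdiff.2 ⟨Finset.mem_univ v, hvC⟩
      exact K_clique hM (hKuncov u hu) (hKuncov v hvK) (Ne.symm hvu)
  -- |K.image c| ≤ 2^m - 1
  have himg : (K.image c).card ≤ 2 ^ m - 1 := by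
    have : (K.image c).card ≤ (M.powerset.erase ∅).card := by
      apply Finset.card_le_card_of_injOn T
      · intro t ht
        rcases Finset.mem_image.1 ht with ⟨u, hu, rfl⟩
        refine Finset.mem_erase.2 ⟨hTne u hu, Finset.mem_powerset.2 ?_⟩
        intro e heT
        exact Finset.mem_of_mem_filter e heT
      · intro t1 ht1 t2 ht2 h12
        rcases Finset.mem_coe.1 ht1 with h1
        rcases Finset.mem_image.1 ht1 with ⟨u, hu, rfl⟩
        rcases Finset.mem_image.1 ht2 with ⟨v, hv, rfl⟩
        exact hinj u hu v hv h12
    calc (K.image c).card ≤ (M.powerset.erase ∅).card := this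
      _ = 2 ^ m - 1 := by
          rw [Finset.card_erase_of_mem (Finset.mem_powerset.2 (Finset.empty_subset M)),
            Finset.card_powerset, hm]
  -- |K| ≤ (2^m - 1) * m
  have hKcard : K.card ≤ (2 ^ m - 1) * m := by
    have hfib : ∀ t ∈ K.image c, (K.filter fun v => c v = t).card ≤ m := by
      intro t ht
      rcases Finset.mem_image.1 ht with ⟨u, hu, rfl⟩
      have hsub : (K.filter fun v => c v = c u) ⊆
          K.filter fun v => ∀ x ∈ coveredVerts M, (G.Adj v x ↔ G.Adj u x) := by
        intro v hvf
        rcases Finset.mem_filter.1 hvf with ⟨hvK, hvc⟩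
        refine Finset.mem_filter.2 ⟨hvK, fun x hx => ?_⟩
        constructor
        · intro h
          have : x ∈ c v := Finset.mem_filter.2 ⟨hx, h⟩
          rw [hvc] at this
          exact (Finset.mem_filter.1 this).2
        · intro h
          have : x ∈ c u := Finset.mem_filter.2 ⟨hx, h⟩
          rw [← hvc] at this
          exact (Finset.mem_filter.1 this).2
      exact (Finset.card_le_card hsub).trans (hclass u hu)
    calc K.card = ∑ t ∈ K.image c, (K.filter fun v => c v = t).card :=
          Finset.card_eq_sum_card_image c K
      _ ≤ ∑ _t ∈ K.image c, m := Finset.sum_le_sum hfib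
      _ = (K.image c).card * m := by rw [Finset.sum_const, smul_eq_mul]
      _ ≤ (2 ^ m - 1) * m := Nat.mul_le_mul_right m himg
  -- assemble
  have hsplit : K.card + C.card = Fintype.card V := by
    rw [hK]
    rw [Finset.card_sdiff_add_card_eq_card (Finset.subset_univ C)]
    rfl
  have hp : 1 ≤ 2 ^ m := Nat.one_le_two_pow
  have : Fintype.card V ≤ (2 ^ m - 1) * m + 2 * m := by omega
  calc Fintype.card V ≤ (2 ^ m - 1) * m + 2 * m := this
    _ ≤ m * (2 ^ m + 1) := by
        have h1 : (2 ^ m - 1) * m = 2 ^ m * m - m := by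
          rw [Nat.sub_mul, one_mul]
        have h2 : m ≤ 2 ^ m * m := Nat.le_mul_of_pos_left m (by positivity)
        have h3 : 2 ^ m * m = m * 2 ^ m := Nat.mul_comm _ _
        have h4 : m * (2 ^ m + 1) = m * 2 ^ m + m := by ring
        omega
end

section
/- Let G be a finite interval graph with no universal vertex, let M̄ be a maximum antimatching of G with |M̄| = m ≥ 1, and let K = V(G) ∖ V(M̄). Suppose moreover that every equivalence class of the relation on K identifying vertices with the same neighborhood inside V(M̄) has at most m vertices. Then |V(G)| ≤ m³ + m² + m. -/
open Finset

/-!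
Write `K` for the vertices not covered by `M̄`. By maximality `K` is a clique, so its intervals
share a point `p`, and no two distinct vertices of `K` miss the two ends of one pair of `M̄`
respectively, since that pair could be swapped for two new ones. So a pair both of whose ends are
missed by `K` is missed by only one vertex of `K`. Any other vertex of `K` misses only covered
vertices whose partner is adjacent to all of `K`, at most one per pair, and these lie strictly
left or strictly right of `p`. On each side a vertex of `K` misses exactly those whose intervals
end farthest from `p`, so its non-neighbours are determined by their number on each side, and
zero on both sides would make it universal. This bounds the number of neighbourhood classes of
`K` by `m² + m - 1`, and each class has at most `m` vertices.
-/

theorem Finset.card_image_add_one_le_of_chains {ι α : Type*} [DecidableEq α] {s : Finset ι}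
    {A : ι → Finset α} {L R : Finset α} (hsub : ∀ i ∈ s, A i ⊆ L ∪ R)
    (hne : ∀ i ∈ s, (A i).Nonempty)
    (hL : ∀ i ∈ s, ∀ j ∈ s, A i ∩ L ⊆ A j ∩ L ∨ A j ∩ L ⊆ A i ∩ L)
    (hR : ∀ i ∈ s, ∀ j ∈ s, A i ∩ R ⊆ A j ∩ R ∨ A j ∩ R ⊆ A i ∩ R) :
    #(s.image A) + 1 ≤ (#L + 1) * (#R + 1) := by
  have eq_of_card_eq {X Y : Finset α} (h : X ⊆ Y ∨ Y ⊆ X) (hc : #X = #Y) : X = Y :=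
    h.elim (fun h => eq_of_subset_of_card_le h hc.ge)
      (fun h => (eq_of_subset_of_card_le h hc.le).symm)
  have hsplit : ∀ i ∈ s, A i = A i ∩ L ∪ A i ∩ R := fun i hi => by
    rw [← inter_union_distrib_left, inter_eq_left.2 (hsub i hi)]
  let Φ : Finset α → ℕ × ℕ := fun B => (#(B ∩ L), #(B ∩ R))
  have hmaps : ∀ B ∈ s.image A, Φ B ∈ (range (#L + 1) ×ˢ range (#R + 1)).erase (0, 0) := by
    simp only [mem_image, forall_exists_index, and_imp, forall_apply_eq_imp_iff₂]
    intro i hi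
    refine mem_erase.2 ⟨fun h => ?_, mem_product.2 ⟨?_, ?_⟩⟩
    · obtain ⟨hL0, hR0⟩ := Prod.mk.inj h
      have hAi := hne i hi
      rw [hsplit i hi, card_eq_zero.1 hL0, card_eq_zero.1 hR0, empty_union] at hAi
      exact not_nonempty_empty hAi
    · exact mem_range.2 (Nat.lt_succ_of_le (card_le_card inter_subset_right))
    · exact mem_range.2 (Nat.lt_succ_of_le (card_le_card inter_subset_right))
  have hinj : Set.InjOn Φ (s.image A) := by
    rintro _ hAi _ hAj h
    obtain ⟨i, hi, rfl⟩ := mem_image.1 hAi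
    obtain ⟨j, hj, rfl⟩ := mem_image.1 hAj
    rw [hsplit i hi, hsplit j hj, eq_of_card_eq (hL i hi j hj) (congrArg Prod.fst h),
      eq_of_card_eq (hR i hi j hj) (congrArg Prod.snd h)]
  calc #(s.image A) + 1 ≤ #((range (#L + 1) ×ˢ range (#R + 1)).erase (0, 0)) + 1 := by
        gcongr; exact card_le_card_of_injOn Φ hmaps hinj
    _ = (#L + 1) * (#R + 1) := by
        rw [card_erase_of_mem (by simp), card_product, card_range, card_range]
        exact Nat.sub_add_cancel (Nat.succ_le_of_lt (by positivity))

theorem Sym2.card_filter_mem_le_one {α : Type*} [DecidableEq α] {e : Sym2 α} {s : Finset α}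
    (h : ¬ ∀ z ∈ e, z ∈ s) : #(s.filter (· ∈ e)) ≤ 1 := by
  refine card_le_one.2 fun x hx y hy => by_contra fun hxy => h fun z hz => ?_
  rw [mem_filter] at hx hy
  rw [(Sym2.mem_and_mem_iff hxy).1 ⟨hx.2, hy.2⟩, Sym2.mem_iff] at hz
  rcases hz with rfl | rfl
  exacts [hx.1, hy.1]

theorem mul_add_one_mul_add_one_add_le {a b s m : ℕ} (h : a + b + s ≤ m) :
    m * ((a + 1) * (b + 1) + s) ≤ m ^ 3 + m ^ 2 := by
  rcases Nat.eq_zero_or_pos m with rfl | hm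
  · simp
  have hab : a * b + 1 ≤ m ^ 2 := by
    rcases Nat.eq_zero_or_pos (a * b) with h0 | hpos
    · rw [h0]
      exact Nat.one_le_pow _ _ hm
    · have ha := Nat.pos_of_mul_pos_right hpos
      have hb := Nat.pos_of_mul_pos_left hpos
      nlinarith [sq_nonneg ((a : ℤ) - b)]
  calc m * ((a + 1) * (b + 1) + s) ≤ m * (m ^ 2 + m) := Nat.mul_le_mul_left _ (by nlinarith)
    _ = m ^ 3 + m ^ 2 := by ring

section Antimatching

variable {V : Type*} {G : SimpleGraph V} {M M' : Finset (Sym2 V)} {e : Sym2 V} {a b u w x : V}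

theorem IsAntimatching.subset (hM : IsAntimatching G M) (h : M' ⊆ M) : IsAntimatching G M' :=
  ⟨fun e he => hM.1 e (h he), fun e he f hf => hM.2 e (h he) f (h hf)⟩

theorem IsAntimatching.ne_of_mk_mem (hM : IsAntimatching G M) (he : s(a, b) ∈ M) : a ≠ b :=
  (SimpleGraph.compl_adj G a b).1 (hM.1 _ he) |>.1

variable [Fintype V] [DecidableEq V]

@[simp]
theorem mem_coveredVerts_s11 : x ∈ coveredVerts M ↔ ∃ e ∈ M, x ∈ e := by
  simp [coveredVerts]

theorem mem_coveredVerts_of_mem (he : e ∈ M) (hx : x ∈ e) : x ∈ coveredVerts M :=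
  mem_coveredVerts_s11.2 ⟨e, he, hx⟩

theorem coveredVerts_mono (h : M' ⊆ M) : coveredVerts M' ⊆ coveredVerts M := fun _ hx =>
  let ⟨_, he, hx⟩ := mem_coveredVerts_s11.1 hx
  mem_coveredVerts_of_mem (h he) hx

theorem mk_notMem_of_notMem_coveredVerts (ha : a ∉ coveredVerts M) : s(a, b) ∉ M := fun h =>
  ha (mem_coveredVerts_of_mem h (Sym2.mem_mk_left a b))

namespace IsAntimatching

theorem notMem_coveredVerts_erase (hM : IsAntimatching G M) (he : e ∈ M) (hx : x ∈ e) :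
    x ∉ coveredVerts (M.erase e) := by
  rw [mem_coveredVerts_s11]
  rintro ⟨f, hf, hxf⟩
  exact hM.2 e he f (mem_of_mem_erase hf) (ne_of_mem_erase hf).symm x hx hxf

theorem insert (hM : IsAntimatching G M) (hab : a ≠ b) (hadj : ¬ G.Adj a b)
    (ha : a ∉ coveredVerts M) (hb : b ∉ coveredVerts M) :
    IsAntimatching G (insert s(a, b) M) := by
  have hfresh : ∀ f ∈ M, ∀ x ∈ s(a, b), x ∉ f := by
    intro f hf x hx hxf
    rcases Sym2.mem_iff.1 hx with rfl | rfl
    exacts [ha (mem_coveredVerts_of_mem hf hxf), hb (mem_coveredVerts_of_mem hf hxf)]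
  refine ⟨fun e he => ?_, fun e he f hf hef => ?_⟩
  · rcases mem_insert.1 he with rfl | he
    · exact (SimpleGraph.compl_adj G a b).2 ⟨hab, hadj⟩
    · exact hM.1 e he
  · rcases mem_insert.1 he with rfl | he <;> rcases mem_insert.1 hf with rfl | hf
    · exact absurd rfl hef
    · exact hfresh f hf
    · exact fun x hxe hxf => hfresh e he x hxf hxe
    · exact hM.2 e he f hf hef

theorem card_coveredVerts (hM : IsAntimatching G M) : #(coveredVerts M) = 2 * #M := by
  have hbiUnion : coveredVerts M = M.biUnion Sym2.toFinset := by
    ext; simp [Sym2.mem_toFinset]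
  rw [hbiUnion, card_biUnion, sum_const_nat fun e he => Sym2.card_toFinset_of_not_isDiag e
    (SimpleGraph.not_isDiag_of_mem_edgeSet _ (hM.1 e he)), mul_comm]
  intro e he f hf hef
  exact disjoint_left.2 fun x hxe hxf =>
    hM.2 e he f hf hef x (Sym2.mem_toFinset.1 hxe) (Sym2.mem_toFinset.1 hxf)

end IsAntimatching

namespace IsMaxAntimatching

theorem adj (hM : IsMaxAntimatching G M) (hu : u ∉ coveredVerts M) (hw : w ∉ coveredVerts M)
    (huw : u ≠ w) : G.Adj u w := by
  by_contra hadj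
  have hcard := hM.2 _ (hM.1.insert huw hadj hu hw)
  rw [card_insert_of_notMem (mk_notMem_of_notMem_coveredVerts hu)] at hcard
  omega

theorem eq_of_not_adj (hM : IsMaxAntimatching G M) (he : s(a, b) ∈ M)
    (hu : u ∉ coveredVerts M) (hw : w ∉ coveredVerts M) (hua : ¬ G.Adj u a)
    (hwb : ¬ G.Adj w b) : u = w := by
  by_contra huw
  have ha : a ∈ coveredVerts M := mem_coveredVerts_of_mem he (Sym2.mem_mk_left a b)
  have hb : b ∈ coveredVerts M := mem_coveredVerts_of_mem he (Sym2.mem_mk_right a b)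
  set M₀ := M.erase s(a, b)
  have hcov₀ {v : V} (hv : v ∉ coveredVerts M) : v ∉ coveredVerts M₀ :=
    fun h => hv (coveredVerts_mono (erase_subset _ _) h)
  have ha₀ := hM.1.notMem_coveredVerts_erase he (Sym2.mem_mk_left a b)
  have hb₀ := hM.1.notMem_coveredVerts_erase he (Sym2.mem_mk_right a b)
  have hM₁ : IsAntimatching G (insert s(w, b) M₀) :=
    (hM.1.subset (erase_subset _ _)).insert (ne_of_mem_of_not_mem hb hw).symm hwb (hcov₀ hw) hb₀
  have hu₁ : u ∉ coveredVerts (insert s(w, b) M₀) := by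
    simp only [mem_coveredVerts_s11, exists_mem_insert, Sym2.mem_iff, not_or]
    exact ⟨⟨huw, (ne_of_mem_of_not_mem hb hu).symm⟩, mem_coveredVerts_s11.not.1 (hcov₀ hu)⟩
  have ha₁ : a ∉ coveredVerts (insert s(w, b) M₀) := by
    simp only [mem_coveredVerts_s11, exists_mem_insert, Sym2.mem_iff, not_or]
    exact ⟨⟨ne_of_mem_of_not_mem ha hw, hM.1.ne_of_mk_mem he⟩, mem_coveredVerts_s11.not.1 ha₀⟩
  have hcard := hM.2 _ (hM₁.insert (ne_of_mem_of_not_mem ha hu).symm hua hu₁ ha₁)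
  rw [card_insert_of_notMem (mk_notMem_of_notMem_coveredVerts hu₁),
    card_insert_of_notMem (mk_notMem_of_notMem_coveredVerts (hcov₀ hw)),
    card_erase_of_mem he] at hcard
  have := card_pos.2 ⟨_, he⟩
  omega

theorem isClique (hM : IsMaxAntimatching G M) :
    G.IsClique (↑(coveredVerts M)ᶜ : Set V) := fun _ hu _ hw =>
  hM.adj (mem_compl.1 hu) (mem_compl.1 hw)

end IsMaxAntimatching

end Antimatching

section MissedVertices

variable {V : Type*} [Fintype V] [DecidableEq V] (G : SimpleGraph V) [DecidableRel G.Adj]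
  (M : Finset (Sym2 V))

def missedBy (u : V) : Finset V :=
  (coveredVerts M).filter fun x => ¬ G.Adj u x

def missedVerts : Finset V :=
  (coveredVerts M).filter fun x => ∃ u ∉ coveredVerts M, ¬ G.Adj u x

def missedPairs : Finset (Sym2 V) :=
  M.filter fun e => ∀ x ∈ e, x ∈ missedVerts G M

def pairMissers : Finset V :=
  (missedPairs G M).biUnion fun e => (coveredVerts M)ᶜ.filter fun u => ∃ x ∈ e, ¬ G.Adj u x

def singlyMissedVerts : Finset V :=
  (M \ missedPairs G M).biUnion fun e => (missedVerts G M).filter (· ∈ e)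

variable {G M} {e : Sym2 V} {u v : V} {T : Finset V}

theorem missedBy_eq_missedBy_iff :
    missedBy G M v = missedBy G M u ↔ ∀ x ∈ coveredVerts M, (G.Adj v x ↔ G.Adj u x) := by
  simp only [missedBy, filter_inj', not_iff_not]

theorem missedBy_inter_of_subset (hT : T ⊆ coveredVerts M) :
    missedBy G M u ∩ T = T.filter fun x => ¬ G.Adj u x := by
  rw [missedBy, filter_inter, inter_eq_right.2 hT]

theorem IsMaxAntimatching.missedBy_nonempty (hM : IsMaxAntimatching G M)
    (hu : u ∉ coveredVerts M) (huniv : ∃ v ≠ u, ¬ G.Adj u v) : (missedBy G M u).Nonempty := by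
  obtain ⟨v, hvu, huv⟩ := huniv
  have hv : v ∈ coveredVerts M := by_contra fun hv => huv (hM.adj hu hv hvu.symm)
  exact ⟨v, mem_filter.2 ⟨hv, huv⟩⟩

theorem IsMaxAntimatching.card_filter_exists_not_adj_le_one (hM : IsMaxAntimatching G M)
    (he : e ∈ M) (hmissed : ∀ x ∈ e, x ∈ missedVerts G M) :
    #((coveredVerts M)ᶜ.filter fun u => ∃ x ∈ e, ¬ G.Adj u x) ≤ 1 := by
  induction e using Sym2.ind with | _ a b => ?_
  obtain ⟨-, za, hza, hzaa⟩ := mem_filter.1 (hmissed a (Sym2.mem_mk_left a b))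
  obtain ⟨-, zb, hzb, hzbb⟩ := mem_filter.1 (hmissed b (Sym2.mem_mk_right a b))
  refine card_le_one.2 fun u hu w hw => ?_
  simp only [mem_filter, mem_compl] at hu hw
  obtain ⟨hu, x, hx, hux⟩ := hu
  obtain ⟨hw, y, hy, hwy⟩ := hw
  rcases Sym2.mem_iff.1 hx with rfl | rfl <;> rcases Sym2.mem_iff.1 hy with rfl | rfl
  · exact (hM.eq_of_not_adj he hu hzb hux hzbb).trans (hM.eq_of_not_adj he hw hzb hwy hzbb).symm
  · exact hM.eq_of_not_adj he hu hw hux hwy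
  · exact (hM.eq_of_not_adj he hw hu hwy hux).symm
  · exact (hM.eq_of_not_adj he hza hu hzaa hux).symm.trans (hM.eq_of_not_adj he hza hw hzaa hwy)

theorem missedPairs_subset : missedPairs G M ⊆ M :=
  filter_subset _ _

theorem IsMaxAntimatching.card_pairMissers_le (hM : IsMaxAntimatching G M) :
    #(pairMissers G M) ≤ #(missedPairs G M) := by
  refine (card_biUnion_le_card_mul _ _ 1 fun e he => ?_).trans_eq (mul_one _)
  exact hM.card_filter_exists_not_adj_le_one (mem_filter.1 he).1 (mem_filter.1 he).2

theorem card_singlyMissedVerts_add_card_missedPairs_le :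
    #(singlyMissedVerts G M) + #(missedPairs G M) ≤ #M := by
  have h := card_biUnion_le_card_mul (M \ missedPairs G M)
    (fun e => (missedVerts G M).filter (· ∈ e)) 1 fun e he =>
    Sym2.card_filter_mem_le_one fun h => (mem_sdiff.1 he).2 (mem_filter.2 ⟨(mem_sdiff.1 he).1, h⟩)
  rw [card_sdiff_of_subset missedPairs_subset, mul_one] at h
  have := card_le_card (missedPairs_subset (G := G) (M := M))
  unfold singlyMissedVerts
  omega

theorem singlyMissedVerts_subset_missedVerts : singlyMissedVerts G M ⊆ missedVerts G M :=
  biUnion_subset.2 fun _ _ => filter_subset _ _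

theorem missedBy_subset_singlyMissedVerts (hu : u ∉ coveredVerts M)
    (hU : u ∉ pairMissers G M) : missedBy G M u ⊆ singlyMissedVerts G M := by
  intro x hx
  obtain ⟨hxc, hux⟩ := mem_filter.1 hx
  obtain ⟨e, he, hxe⟩ := mem_coveredVerts_s11.1 hxc
  have heP : e ∉ missedPairs G M := fun heP =>
    hU (mem_biUnion.2 ⟨e, heP, mem_filter.2 ⟨mem_compl.2 hu, x, hxe, hux⟩⟩)
  exact mem_biUnion.2 ⟨e, mem_sdiff.2 ⟨he, heP⟩, mem_filter.2 ⟨mem_filter.2 ⟨hxc, u, hu, hux⟩, hxe⟩⟩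

end MissedVertices

section Intervals

open Set (Icc)

variable {V : Type*} {G : SimpleGraph V}

def IntervalModel (G : SimpleGraph V) (f : V → ℝ × ℝ) : Prop :=
  (∀ v, (f v).1 ≤ (f v).2) ∧
    ∀ u v : V, G.Adj u v ↔ u ≠ v ∧ (Icc (f u).1 (f u).2 ∩ Icc (f v).1 (f v).2).Nonempty

namespace IntervalModel

variable {f : V → ℝ × ℝ} {p : ℝ} {u x : V}

theorem adj_iff (hf : IntervalModel G f) (hne : u ≠ x) :
    G.Adj u x ↔ (f u).1 ≤ (f x).2 ∧ (f x).1 ≤ (f u).2 := by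
  rw [hf.2, Set.Icc_inter_Icc, Set.nonempty_Icc, max_le_iff, le_min_iff, le_min_iff]
  have := hf.1 u
  have := hf.1 x
  tauto

theorem adj_of_mem_Icc (hf : IntervalModel G f) (hu : p ∈ Icc (f u).1 (f u).2)
    (hx : p ∈ Icc (f x).1 (f x).2) (hne : u ≠ x) : G.Adj u x :=
  (hf.2 u x).2 ⟨hne, p, hu, hx⟩

theorem not_adj_iff_of_snd_lt (hf : IntervalModel G f) (hu : p ∈ Icc (f u).1 (f u).2)
    (hx : (f x).2 < p) : ¬ G.Adj u x ↔ (f x).2 < (f u).1 := by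
  have hne : u ≠ x := by rintro rfl; exact hu.2.not_gt hx
  rw [hf.adj_iff hne, and_iff_left (by linarith [hf.1 x, hu.2]), not_le]

theorem not_adj_iff_of_lt_fst (hf : IntervalModel G f) (hu : p ∈ Icc (f u).1 (f u).2)
    (hx : p < (f x).1) : ¬ G.Adj u x ↔ (f u).2 < (f x).1 := by
  have hne : u ≠ x := by rintro rfl; exact hu.1.not_gt hx
  rw [hf.adj_iff hne, and_iff_right (by linarith [hf.1 x, hu.1]), not_le]

theorem exists_common_point (hf : IntervalModel G f) {S : Finset V}
    (hS : G.IsClique (S : Set V)) : ∃ p, ∀ u ∈ S, p ∈ Icc (f u).1 (f u).2 := by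
  rcases S.eq_empty_or_nonempty with rfl | hne
  · exact ⟨0, by simp⟩
  obtain ⟨w, hw, hmax⟩ := exists_max_image S (fun u => (f u).1) hne
  refine ⟨(f w).1, fun u hu => ⟨hmax u hu, ?_⟩⟩
  rcases eq_or_ne w u with rfl | hwu
  · exact hf.1 w
  · exact ((hf.adj_iff hwu).1 (hS hw hu hwu)).1

variable [Fintype V] [DecidableEq V] [DecidableRel G.Adj] {M : Finset (Sym2 V)}

theorem card_image_missedBy_add_one_le (hf : IntervalModel G f)
    (hp : ∀ u ∉ coveredVerts M, p ∈ Icc (f u).1 (f u).2) {s S : Finset V}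
    (hS : S ⊆ missedVerts G M) (hs : ∀ u ∈ s, u ∉ coveredVerts M)
    (hsub : ∀ u ∈ s, missedBy G M u ⊆ S) (hne : ∀ u ∈ s, (missedBy G M u).Nonempty) :
    ∃ a b, a + b = #S ∧ #(s.image (missedBy G M)) + 1 ≤ (a + 1) * (b + 1) := by
  set L := S.filter fun x => (f x).2 < p
  set R := S.filter fun x => ¬ (f x).2 < p
  have hScov : S ⊆ coveredVerts M := hS.trans (filter_subset _ _)
  have hL : ∀ u ∉ coveredVerts M,
      missedBy G M u ∩ L = L.filter fun x => (f x).2 < (f u).1 := fun u hu => by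
    rw [missedBy_inter_of_subset ((filter_subset _ _).trans hScov)]
    exact filter_congr fun x hx => hf.not_adj_iff_of_snd_lt (hp u hu) (mem_filter.1 hx).2
  -- a vertex of `R` is missed by some uncovered vertex, so its interval avoids `p`
  have hRp : ∀ x ∈ R, p < (f x).1 := by
    intro x hx
    obtain ⟨hxS, hxp⟩ := mem_filter.1 hx
    obtain ⟨hxc, w, hw, hwx⟩ := mem_filter.1 (hS hxS)
    by_contra h
    exact hwx (hf.adj_of_mem_Icc (hp w hw) ⟨not_lt.1 h, not_lt.1 hxp⟩
      (ne_of_mem_of_not_mem hxc hw).symm)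
  have hR : ∀ u ∉ coveredVerts M,
      missedBy G M u ∩ R = R.filter fun x => (f u).2 < (f x).1 := fun u hu => by
    rw [missedBy_inter_of_subset ((filter_subset _ _).trans hScov)]
    exact filter_congr fun x hx => hf.not_adj_iff_of_lt_fst (hp u hu) (hRp x hx)
  refine ⟨#L, #R, card_filter_add_card_filter_not _,
    card_image_add_one_le_of_chains (fun u hu => ?_) hne (fun u hu v hv => ?_)
      (fun u hu v hv => ?_)⟩
  · rw [filter_union_filter_not_eq]
    exact hsub u hu
  · rw [hL u (hs u hu), hL v (hs v hv)]
    rcases le_total (f u).1 (f v).1 with h | h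
    · exact Or.inl (monotone_filter_right _ fun _ _ hx => hx.trans_le h)
    · exact Or.inr (monotone_filter_right _ fun _ _ hx => hx.trans_le h)
  · rw [hR u (hs u hu), hR v (hs v hv)]
    rcases le_total (f u).2 (f v).2 with h | h
    · exact Or.inr (monotone_filter_right _ fun _ _ hx => h.trans_lt hx)
    · exact Or.inl (monotone_filter_right _ fun _ _ hx => h.trans_lt hx)

theorem exists_card_image_missedBy_add_one_le (hf : IntervalModel G f)
    (hM : IsMaxAntimatching G M) (hp : ∀ u ∉ coveredVerts M, p ∈ Icc (f u).1 (f u).2)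
    (huniv : ∀ u, ∃ v ≠ u, ¬ G.Adj u v) :
    ∃ a b s, a + b + s ≤ #M ∧
      #((coveredVerts M)ᶜ.image (missedBy G M)) + 1 ≤ (a + 1) * (b + 1) + s := by
  set K := (coveredVerts M)ᶜ
  set U := pairMissers G M
  have hKU : ∀ u ∈ K \ U, u ∉ coveredVerts M := fun u hu => mem_compl.1 (mem_sdiff.1 hu).1
  obtain ⟨a, b, hab, hcard⟩ := hf.card_image_missedBy_add_one_le hp (s := K \ U)
    singlyMissedVerts_subset_missedVerts hKU
    (fun u hu => missedBy_subset_singlyMissedVerts (hKU u hu) (mem_sdiff.1 hu).2)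
    (fun u hu => hM.missedBy_nonempty (hKU u hu) (huniv u))
  refine ⟨a, b, #(missedPairs G M), by
    linarith [card_singlyMissedVerts_add_card_missedPairs_le (G := G) (M := M)], ?_⟩
  have hsplit : #(K.image (missedBy G M)) ≤ #((K \ U).image (missedBy G M)) + #U :=
    calc #(K.image (missedBy G M)) ≤ #((K \ U ∪ U).image (missedBy G M)) := by
          rw [sdiff_union_self_eq_union]
          exact card_le_card (image_subset_image subset_union_left)
      _ ≤ #((K \ U).image (missedBy G M)) + #U := by
          rw [image_union]
          exact (card_union_le _ _).trans (Nat.add_le_add_left card_image_le _)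
  linarith [hM.card_pairMissers_le]

end IntervalModel

end Intervals

theorem interval_kernel_size_bound_general
    {V : Type*} [Fintype V] [DecidableEq V] (G : SimpleGraph V) [DecidableRel G.Adj]
    (hint : IsIntervalGraph G)
    (hnouniv : ¬ ∃ u : V, ∀ v : V, v ≠ u → G.Adj u v)
    (M : Finset (Sym2 V)) (hM : IsMaxAntimatching G M)
    (m : ℕ) (hm : M.card = m)
    (K : Finset V) (hK : K = Finset.univ \ coveredVerts M)
    (hclass : ∀ u ∈ K,
      (K.filter fun v => ∀ x ∈ coveredVerts M, (G.Adj v x ↔ G.Adj u x)).card ≤ m) :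
    Fintype.card V ≤ m ^ 3 + m ^ 2 + m := by
  obtain ⟨f, hf⟩ : ∃ f, IntervalModel G f := hint
  subst hK hm
  rw [← compl_eq_univ_sdiff] at hclass
  set classes := (coveredVerts M)ᶜ.image (missedBy G M)
  obtain ⟨p, hp⟩ := hf.exists_common_point hM.isClique
  obtain ⟨a, b, s, habs, hclasses⟩ := hf.exists_card_image_missedBy_add_one_le hM
    (fun u hu => hp u (mem_compl.2 hu)) (by simpa using hnouniv)
  have hK : #(coveredVerts M)ᶜ ≤ #M * #classes := card_le_mul_card_image _ _ fun N hN => by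
    obtain ⟨u, hu, rfl⟩ := mem_image.1 hN
    exact (card_le_card (monotone_filter_right _ fun _ _ =>
      missedBy_eq_missedBy_iff.1)).trans (hclass u hu)
  have hV : Fintype.card V = #(coveredVerts M)ᶜ + 2 * #M := by
    rw [← card_compl_add_card, hM.1.card_coveredVerts]
  calc Fintype.card V ≤ #M * (#classes + 1) + #M := by rw [hV, mul_add_one]; omega
    _ ≤ #M * ((a + 1) * (b + 1) + s) + #M := by gcongr
    _ ≤ #M ^ 3 + #M ^ 2 + #M := by linarith [mul_add_one_mul_add_one_add_le habs]

/-- an interval graph with no universal vertex, a maximum antimatching with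
`m ≥ 1` pairs, and all neighborhood classes of `K = V(G) ∖ V(M̄)` of size at most `m`,
has at most `m³ + m² + m` vertices. -/
theorem interval_kernel_size_bound
    {V : Type*} [Fintype V] [DecidableEq V] (G : SimpleGraph V) [DecidableRel G.Adj]
    (hint : IsIntervalGraph G)
    (hnouniv : ¬ ∃ u : V, ∀ v : V, v ≠ u → G.Adj u v)
    (M : Finset (Sym2 V)) (hM : IsMaxAntimatching G M)
    (m : ℕ) (hm : M.card = m) (hm1 : 1 ≤ m)
    (K : Finset V) (hK : K = Finset.univ \ coveredVerts M)
    (hclass : ∀ u ∈ K,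
      (K.filter fun v => ∀ x ∈ coveredVerts M, (G.Adj v x ↔ G.Adj u x)).card ≤ m) :
    Fintype.card V ≤ m ^ 3 + m ^ 2 + m :=
  interval_kernel_size_bound_general G hint hnouniv M hM m hm K hK hclass
end
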